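/- Rank of geometric-centered corrupted EDM: under the assumptions of the previous statement, the matrix G = -(1/2)·J_n·(D + P)·J_n has rank at most min(d + 2m, n - 1). -/

import Mathlib

/-!
Expanding `‖xᵢ - xⱼ‖² = ‖xᵢ‖² - 2⟪xᵢ, xⱼ⟫ + ‖xⱼ‖²` writes `D` as a matrix with constant rows plus
one with constant columns plus `-2` times the Gram matrix of the points. The centering matrix `J`
annihilates the first two from the appropriate side, so `J D J` has rank at most `d`. Since `P`
vanishes off the rows and columns indexed by `S`, it is the sum of a matrix whose nonzero rows lie
in `S` and one whose nonzero columns lie in `S`, so `rank P ≤ 2m`. Finally `𝟙ᵀ J = 0` gives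
`rank J ≤ n - 1`.
-/

open Matrix

namespace Matrix

section Rank

variable {K ι : Type*} [Field K] [Fintype ι]

theorem rank_add_le {m : Type*} [Fintype m] (A B : Matrix m ι K) :
    (A + B).rank ≤ A.rank + B.rank := by
  rw [rank, rank, rank, mulVecLin_add]
  calc Module.finrank K (LinearMap.range (A.mulVecLin + B.mulVecLin))
      ≤ Module.finrank K ↥(LinearMap.range A.mulVecLin ⊔ LinearMap.range B.mulVecLin) :=
        Submodule.finrank_mono (LinearMap.range_add_le _ _)
    _ ≤ _ := Submodule.finrank_add_le_finrank_add_finrank _ _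

theorem rank_le_two_mul_card_of_apply_eq_zero [DecidableEq ι] (A : Matrix ι ι K) (S : Finset ι)
    (hA : ∀ i j, i ∉ S → j ∉ S → A i j = 0) : A.rank ≤ 2 * S.card := by
  set rowsInS : Matrix ι ι K := of fun i j => if i ∈ S then A i j else 0
  have hrows : rowsInS.rank ≤ S.card := by
    refine rank_le_card_of_support_subset _ S fun i hi => ?_
    by_contra h
    exact hi (funext fun j => by simp [rowsInS, Finset.mem_coe.not.mp h])
  have hcols : (A - rowsInS).rank ≤ S.card := by
    rw [← rank_transpose]
    refine rank_le_card_of_support_subset _ S fun j hj => ?_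
    by_contra h
    refine hj (funext fun i => ?_)
    by_cases hi : i ∈ S
    · simp [rowsInS, hi]
    · simp [rowsInS, hi, hA i j hi (Finset.mem_coe.not.mp h)]
  calc A.rank = (rowsInS + (A - rowsInS)).rank := by rw [add_sub_cancel]
    _ ≤ S.card + S.card := (rank_add_le _ _).trans (add_le_add hrows hcols)
    _ = 2 * S.card := (two_mul _).symm

end Rank

section Centering

variable (K ι : Type*) [Field K] [Fintype ι] [DecidableEq ι]

def centeringMatrix : Matrix ι ι K := 1 - (Fintype.card ι : K)⁻¹ • of fun _ _ => 1

variable {K ι} [CharZero K]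

theorem sum_centeringMatrix_apply_left (j : ι) : ∑ i, centeringMatrix K ι i j = 0 := by
  have : (Fintype.card ι : K) ≠ 0 := Nat.cast_ne_zero.mpr (Fintype.card_pos_iff.mpr ⟨j⟩).ne'
  simp [centeringMatrix, sub_apply, one_apply, Finset.sum_sub_distrib, this]

theorem sum_centeringMatrix_apply_right (i : ι) : ∑ j, centeringMatrix K ι i j = 0 := by
  have : (Fintype.card ι : K) ≠ 0 := Nat.cast_ne_zero.mpr (Fintype.card_pos_iff.mpr ⟨i⟩).ne'
  simp [centeringMatrix, sub_apply, one_apply, Finset.sum_sub_distrib, this]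

theorem replicateCol_mul_centeringMatrix {ι' : Type*} (u : ι' → K) :
    replicateCol ι u * centeringMatrix K ι = 0 := by
  ext i j
  simp [mul_apply, ← Finset.mul_sum, sum_centeringMatrix_apply_left]

theorem centeringMatrix_mul_replicateRow {ι' : Type*} (v : ι' → K) :
    centeringMatrix K ι * replicateRow ι v = 0 := by
  ext i j
  simp [mul_apply, ← Finset.sum_mul, sum_centeringMatrix_apply_right]

theorem centeringMatrix_mul_replicate_add_mul_centeringMatrix (u v : ι → K)
    (A : Matrix ι ι K) :
    centeringMatrix K ι * (replicateCol ι u + replicateRow ι v + A) * centeringMatrix K ι =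
      centeringMatrix K ι * A * centeringMatrix K ι := by
  rw [Matrix.mul_add, Matrix.mul_add, centeringMatrix_mul_replicateRow, Matrix.add_mul,
    Matrix.add_mul, Matrix.mul_assoc, replicateCol_mul_centeringMatrix]
  simp

theorem rank_centeringMatrix_le : (centeringMatrix K ι).rank ≤ Fintype.card ι - 1 := by
  rcases isEmpty_or_nonempty ι with hι | hι
  · exact (rank_le_card_height _).trans_eq (by simp)
  have hones : (replicateCol ι (fun _ : Unit => (1 : K))).rank = 1 := by
    refine (LinearIndependent.rank_matrix ?_).trans Fintype.card_unit
    rw [linearIndependent_unique_iff]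
    exact Function.ne_iff.mpr ⟨Classical.arbitrary ι, by simp⟩
  have := rank_add_rank_le_card_of_mul_eq_zero
    (replicateCol_mul_centeringMatrix (ι := ι) fun _ : Unit => (1 : K))
  omega

end Centering

theorem rank_gram_le_finrank {𝕜 E ι : Type*} [RCLike 𝕜] [NormedAddCommGroup E]
    [InnerProductSpace 𝕜 E] [FiniteDimensional 𝕜 E] [Fintype ι] (v : ι → E) :
    (gram 𝕜 v).rank ≤ Module.finrank 𝕜 E := by
  rw [gram_eq_conjTranspose_mul (stdOrthonormalBasis 𝕜 E)]
  refine (rank_mul_le_right _ _).trans ((rank_le_card_height _).trans_eq ?_)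
  exact Fintype.card_fin _

theorem of_norm_sub_sq_eq {E ι : Type*} [NormedAddCommGroup E] [InnerProductSpace ℝ E]
    (x : ι → E) :
    of (fun i j => ‖x i - x j‖ ^ 2) =
      replicateCol ι (fun i => ‖x i‖ ^ 2) + replicateRow ι (fun j => ‖x j‖ ^ 2) +
        (-2 : ℝ) • gram ℝ x := by
  ext i j
  simp only [of_apply, add_apply, replicateCol_apply, replicateRow_apply, smul_apply, gram_apply,
    smul_eq_mul, norm_sub_sq_real]
  ring

theorem rank_centeringMatrix_mul_of_norm_sub_sq_mul_centeringMatrix_le {E ι : Type*}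
    [NormedAddCommGroup E] [InnerProductSpace ℝ E] [FiniteDimensional ℝ E] [Fintype ι]
    [DecidableEq ι] (x : ι → E) :
    (centeringMatrix ℝ ι * of (fun i j => ‖x i - x j‖ ^ 2) * centeringMatrix ℝ ι).rank ≤
      Module.finrank ℝ E := by
  rw [of_norm_sub_sq_eq, centeringMatrix_mul_replicate_add_mul_centeringMatrix, Matrix.mul_smul,
    Matrix.smul_mul,
    rank_smul_of_mem_nonZeroDivisors _ (mem_nonZeroDivisors_of_ne_zero (by norm_num))]
  exact (rank_mul_le_left _ _).trans ((rank_mul_le_right _ _).trans (rank_gram_le_finrank x))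

end Matrix

theorem gcedm_corrupted_rank_general (n d m : ℕ)
    (x : Fin n → EuclideanSpace ℝ (Fin d))
    (S : Finset (Fin n)) (hS : S.card = m)
    (D P J G : Matrix (Fin n) (Fin n) ℝ)
    (hD : ∀ i j, D i j = ‖x i - x j‖ ^ 2)
    (hPsupp : ∀ i j, i ∉ S → j ∉ S → P i j = 0)
    (hJ : J = 1 - (n : ℝ)⁻¹ • Matrix.of (fun _ _ => (1 : ℝ)))
    (hG : G = -(1/2 : ℝ) • (J * (D + P) * J)) :
    G.rank ≤ min (d + 2 * m) (n - 1) := by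
  have hJ : J = centeringMatrix ℝ (Fin n) := by rw [hJ, centeringMatrix, Fintype.card_fin]
  have hD : D = of fun i j => ‖x i - x j‖ ^ 2 := ext hD
  rw [hG, rank_smul_of_mem_nonZeroDivisors _ (mem_nonZeroDivisors_of_ne_zero (by norm_num))]
  refine le_min ?_ ?_
  · have hJDJ : (J * D * J).rank ≤ d := by
      rw [hJ, hD]
      exact (rank_centeringMatrix_mul_of_norm_sub_sq_mul_centeringMatrix_le x).trans_eq
        finrank_euclideanSpace_fin
    have hJPJ : (J * P * J).rank ≤ 2 * m :=
      (rank_mul_le_left _ _).trans <| (rank_mul_le_right _ _).trans <|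
        hS ▸ rank_le_two_mul_card_of_apply_eq_zero P S hPsupp
    rw [Matrix.mul_add, Matrix.add_mul]
    exact (rank_add_le _ _).trans (add_le_add hJDJ hJPJ)
  · calc (J * (D + P) * J).rank ≤ J.rank := (rank_mul_le_left _ _).trans (rank_mul_le_left _ _)
      _ ≤ n - 1 := by simpa [hJ] using rank_centeringMatrix_le (K := ℝ) (ι := Fin n)

theorem gcedm_corrupted_rank (n d m : ℕ)
    (x : Fin n → EuclideanSpace ℝ (Fin d))
    (S : Finset (Fin n)) (hS : S.card = m)
    (D P J G : Matrix (Fin n) (Fin n) ℝ)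
    (hD : ∀ i j, D i j = ‖x i - x j‖ ^ 2)
    (hPsym : P.IsSymm)
    (hPsupp : ∀ i j, i ∉ S → j ∉ S → P i j = 0)
    (hJ : J = 1 - (n : ℝ)⁻¹ • Matrix.of (fun _ _ => (1 : ℝ)))
    (hG : G = -(1/2 : ℝ) • (J * (D + P) * J)) :
    G.rank ≤ min (d + 2 * m) (n - 1) :=
  gcedm_corrupted_rank_general n d m x S hS D P J G hD hPsupp hJ hG
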